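/- arXiv:2306.06836 — 5 statements merged into one kernel-verified Lean document; each statement's English description precedes it below -/
import Mathlib

section
/- For every ε ∈ (0,1] and every real x, the Huber score function with threshold 1 satisfies −log(1 − x + |x|^{1+ε}) ≤ Ψ_1(x) ≤ log(1 + x + |x|^{1+ε}), where Ψ_1(x) = x for |x| ≤ 1 and Ψ_1(x) = sign(x) for |x| > 1. -/
noncomputable def huberScore1 (x : ℝ) : ℝ :=
  if |x| ≤ 1 then x else Real.sign x

lemma huberScore1_neg (x : ℝ) : huberScore1 (-x) = -huberScore1 x := by
  unfold huberScore1
  rw [abs_neg]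
  split
  · rfl
  · exact Real.sign_neg

lemma exp_le_quad {x : ℝ} (hx : |x| ≤ 1) : Real.exp x ≤ 1 + x + x ^ 2 := by
  have h := Real.exp_bound hx (n := 2) (by norm_num)
  have h1 : ∑ m ∈ Finset.range 2, x ^ m / m.factorial = 1 + x := by
    simp [Finset.sum_range_succ]
  rw [h1] at h
  have h2 := (abs_sub_le_iff.1 h).1
  norm_num [Nat.factorial] at h2
  have : |x| ^ 2 = x ^ 2 := sq_abs x
  nlinarith [sq_nonneg x]

lemma key (ε : ℝ) (hε : ε ∈ Set.Ioc (0 : ℝ) 1) (x : ℝ) :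
    Real.exp (huberScore1 x) ≤ 1 + x + |x| ^ (1 + ε) := by
  obtain ⟨hε0, hε1⟩ := hε
  by_cases h : |x| ≤ 1
  · rw [huberScore1, if_pos h]
    have hsq : x ^ 2 ≤ |x| ^ (1 + ε) := by
      rcases eq_or_ne x 0 with rfl | hx0
      · simp [Real.zero_rpow (by linarith : (1:ℝ) + ε ≠ 0)]
      · have hpos : 0 < |x| := abs_pos.mpr hx0
        calc x ^ 2 = |x| ^ (2:ℝ) := by
              rw [Real.rpow_two, sq_abs]
          _ ≤ |x| ^ (1 + ε) := Real.rpow_le_rpow_of_exponent_ge hpos h (by linarith)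
    linarith [exp_le_quad h]
  · push_neg at h
    rw [huberScore1, if_neg (not_le.mpr h)]
    have habs : |x| ≤ |x| ^ (1 + ε) := by
      calc |x| = |x| ^ (1:ℝ) := (Real.rpow_one _).symm
        _ ≤ |x| ^ (1 + ε) := Real.rpow_le_rpow_of_exponent_le h.le (by linarith)
    rcases lt_or_gt_of_ne (by rintro rfl; norm_num at h : x ≠ 0) with hx | hx
    · rw [Real.sign_of_neg hx]
      have : |x| = -x := abs_of_neg hx
      have he : Real.exp (-1) ≤ 1 := by
        rw [← Real.exp_zero]; exact Real.exp_le_exp.mpr (by norm_num)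
      linarith
    · rw [Real.sign_of_pos hx]
      have : |x| = x := abs_of_pos hx
      have he : Real.exp 1 < 2.7182818286 := Real.exp_one_lt_d9
      linarith

theorem huberScore1_log_bounds (ε : ℝ) (hε : ε ∈ Set.Ioc (0 : ℝ) 1) (x : ℝ) :
    -Real.log (1 - x + |x| ^ (1 + ε)) ≤ huberScore1 x ∧
      huberScore1 x ≤ Real.log (1 + x + |x| ^ (1 + ε)) := by
  have hup := key ε hε x
  have hdn := key ε hε (-x)
  rw [huberScore1_neg, abs_neg] at hdn
  constructor
  · rw [show (1:ℝ) - x + |x| ^ (1+ε) = 1 + -x + |x| ^ (1+ε) by ring]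
    rw [neg_le, Real.le_log_iff_exp_le (lt_of_lt_of_le (Real.exp_pos _) hdn)]
    exact hdn
  · rw [Real.le_log_iff_exp_le (lt_of_lt_of_le (Real.exp_pos _) hup)]
    exact hup
end

section
/- Let d be a positive integer, λ > 0, and let φ₁, …, φ_T ∈ ℝ^d with ‖φ_t‖ ≤ L for all t. Define Σ_t = λI + Σ_{s=1}^t φ_s φ_sᵀ. Then Σ_{t=1}^T min{1, ‖φ_t‖²_{Σ_{t-1}^{-1}}} ≤ 2d log(1 + T L²/(dλ)), where ‖x‖²_A := xᵀ A x. -/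
/-! The log-determinant potential `log det Σ_t` telescopes: by the matrix determinant lemma
`det Σ_{t+1} = det Σ_t · (1 + ‖φ_t‖²_{Σ_t⁻¹})`, and `min 1 x ≤ 2 log (1 + x)`, so the sum
is at most `2 (log det Σ_T - log det Σ_0)`. Finally AM-GM on the eigenvalues bounds
`det Σ_T` by `(tr Σ_T / d)^d ≤ (λ + T L² / d)^d`. -/

open Matrix Finset

lemma min_one_le_two_mul_log_one_add {x : ℝ} (hx : 0 ≤ x) :
    min 1 x ≤ 2 * Real.log (1 + x) := by
  have hx1 : 0 < 1 + x := by linarith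
  calc min 1 x ≤ 2 * x / (1 + x) := by
        rcases le_total 1 x with h | h
        · exact (min_le_left _ _).trans ((le_div_iff₀ hx1).2 (by linarith))
        · exact (min_le_right _ _).trans ((le_div_iff₀ hx1).2 (by nlinarith))
    _ = 2 * (1 - (1 + x)⁻¹) := by field_simp; ring
    _ ≤ 2 * Real.log (1 + x) := by gcongr; exact Real.one_sub_inv_le_log_of_pos hx1

lemma Real.prod_le_sum_div_card_pow {ι : Type*} (s : Finset ι) {z : ι → ℝ}
    (hz : ∀ i ∈ s, 0 ≤ z i) : ∏ i ∈ s, z i ≤ ((∑ i ∈ s, z i) / #s) ^ #s := by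
  rcases s.eq_empty_or_nonempty with rfl | hs
  · simp
  have hcard : (0 : ℝ) < #s := by exact_mod_cast hs.card_pos
  have amgm := Real.geom_mean_le_arith_mean s (fun _ ↦ 1) z (fun _ _ ↦ zero_le_one)
    (by simpa using hcard) hz
  simp only [Real.rpow_one, sum_const, nsmul_eq_mul, mul_one, one_mul] at amgm
  calc ∏ i ∈ s, z i = ((∏ i ∈ s, z i) ^ ((#s : ℝ))⁻¹) ^ #s :=
        (Real.rpow_inv_natCast_pow (prod_nonneg hz) hs.card_pos.ne').symm
    _ ≤ ((∑ i ∈ s, z i) / #s) ^ #s := by gcongr; exact Real.rpow_nonneg (prod_nonneg hz) _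

namespace Matrix

variable {n : Type*}

theorem det_add_vecMulVec [Fintype n] [DecidableEq n] {α : Type*} [CommRing α]
    {A : Matrix n n α} (hA : IsUnit A.det) (u v : n → α) :
    (A + vecMulVec u v).det = A.det * (1 + v ⬝ᵥ A⁻¹ *ᵥ u) := by
  rw [vecMulVec_eq Unit, det_add_replicateCol_mul_replicateRow hA, Matrix.mul_assoc,
    ← replicateCol_mulVec]
  simp [det_unique, replicateRow_mul_replicateCol_apply]

theorem PosSemidef.det_le_trace_div_card_pow [Fintype n] [DecidableEq n] {A : Matrix n n ℝ}
    (hA : A.PosSemidef) :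
    A.det ≤ (A.trace / Fintype.card n) ^ Fintype.card n := by
  rw [hA.isHermitian.det_eq_prod_eigenvalues, hA.isHermitian.trace_eq_sum_eigenvalues]
  simpa using Real.prod_le_sum_div_card_pow univ fun i _ ↦ hA.eigenvalues_nonneg i

/-- The regularized design matrix `Σ_t = A + ∑_{s < t} φ_s φ_sᵀ`. -/
def designMatrix (A : Matrix n n ℝ) (φ : ℕ → n → ℝ) (t : ℕ) : Matrix n n ℝ :=
  A + ∑ s ∈ range t, vecMulVec (φ s) (φ s)

variable {A : Matrix n n ℝ} (φ : ℕ → n → ℝ)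

theorem designMatrix_succ (t : ℕ) :
    designMatrix A φ (t + 1) = designMatrix A φ t + vecMulVec (φ t) (φ t) := by
  rw [designMatrix, designMatrix, sum_range_succ, add_assoc]

theorem trace_designMatrix [Fintype n] (t : ℕ) :
    (designMatrix A φ t).trace = A.trace + ∑ s ∈ range t, φ s ⬝ᵥ φ s := by
  simp [designMatrix, trace_sum]

theorem PosDef.designMatrix [Fintype n] (hA : A.PosDef) (t : ℕ) : (designMatrix A φ t).PosDef :=
  hA.add_posSemidef <| posSemidef_sum _ fun s _ ↦ by
    simpa using posSemidef_vecMulVec_self_star (φ s)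

theorem det_designMatrix [Fintype n] [DecidableEq n] (hA : A.PosDef) (t : ℕ) :
    (designMatrix A φ t).det =
      A.det * ∏ s ∈ range t, (1 + φ s ⬝ᵥ (designMatrix A φ s)⁻¹ *ᵥ φ s) := by
  induction t with
  | zero => simp [Matrix.designMatrix]
  | succ t ih =>
    rw [designMatrix_succ, det_add_vecMulVec (hA.designMatrix φ t).det_pos.ne'.isUnit, ih,
      prod_range_succ, mul_assoc]

theorem sum_min_one_le_two_mul_log_det [Fintype n] [DecidableEq n] (hA : A.PosDef) (t : ℕ) :
    ∑ s ∈ range t, min 1 (φ s ⬝ᵥ (designMatrix A φ s)⁻¹ *ᵥ φ s) ≤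
      2 * (Real.log (designMatrix A φ t).det - Real.log A.det) := by
  have hq : ∀ s, 0 ≤ φ s ⬝ᵥ (designMatrix A φ s)⁻¹ *ᵥ φ s := fun s ↦ by
    simpa using (hA.designMatrix φ s).inv.posSemidef.dotProduct_mulVec_nonneg (φ s)
  rw [det_designMatrix φ hA, Real.log_mul hA.det_pos.ne'
      (prod_ne_zero_iff.2 fun s _ ↦ by linarith [hq s]),
    Real.log_prod fun s _ ↦ by linarith [hq s], add_sub_cancel_left, mul_sum]
  exact sum_le_sum fun s _ ↦ min_one_le_two_mul_log_one_add (hq s)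

end Matrix

theorem elliptical_potential (d T : ℕ) (hd : 0 < d) (lam L : ℝ) (hlam : 0 < lam)
    (φ : ℕ → (Fin d → ℝ)) (hφ : ∀ t, Real.sqrt (φ t ⬝ᵥ φ t) ≤ L)
    (Sig : ℕ → Matrix (Fin d) (Fin d) ℝ)
    (hSig : ∀ t, Sig t = lam • (1 : Matrix (Fin d) (Fin d) ℝ) +
      ∑ s ∈ Finset.range t, vecMulVec (φ s) (φ s)) :
    ∑ t ∈ Finset.range T, min 1 (φ t ⬝ᵥ (Sig t)⁻¹ *ᵥ φ t) ≤
      2 * d * Real.log (1 + T * L ^ 2 / (d * lam)) := by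
  obtain rfl : Sig = designMatrix (lam • 1) φ := funext hSig
  have hA : (lam • 1 : Matrix (Fin d) (Fin d) ℝ).PosDef := PosDef.one.smul hlam
  have hV := (hA.designMatrix φ T).posSemidef
  have hd' : (0 : ℝ) < d := by exact_mod_cast hd
  have hc : 0 < 1 + T * L ^ 2 / (d * lam) := by positivity
  have htrace : (designMatrix (lam • 1) φ T).trace ≤ d * lam + T * L ^ 2 := by
    have hsum := sum_le_sum fun t (_ : t ∈ range T) ↦ (Real.sqrt_le_iff.1 (hφ t)).2
    simp only [sum_const, card_range, nsmul_eq_mul] at hsum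
    simp only [trace_designMatrix, trace_smul, trace_one, Fintype.card_fin, smul_eq_mul]
    linarith
  have hdet : (designMatrix (lam • 1) φ T).det ≤ (lam * (1 + T * L ^ 2 / (d * lam))) ^ d := by
    refine hV.det_le_trace_div_card_pow.trans ?_
    rw [Fintype.card_fin]
    gcongr
    · exact div_nonneg hV.trace_nonneg hd'.le
    · rw [div_le_iff₀' hd']
      field_simp
      linarith
  calc _ ≤ 2 * (Real.log (designMatrix (lam • 1) φ T).det -
          Real.log (lam • 1 : Matrix (Fin d) (Fin d) ℝ).det) :=
        sum_min_one_le_two_mul_log_det φ hA T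
    _ ≤ 2 * (Real.log ((lam * (1 + T * L ^ 2 / (d * lam))) ^ d) - Real.log (lam ^ d)) := by
        gcongr
        · exact (hA.designMatrix φ T).det_pos
        · simp
    _ = 2 * d * Real.log (1 + T * L ^ 2 / (d * lam)) := by
        rw [Real.log_pow, Real.log_pow, Real.log_mul hlam.ne' hc.ne']
        ring
end

section
/- Let ε ∈ (0,1] and let x, a, b ≥ 0 satisfy x ≤ a·x^{1/(1+ε)} + b. Then x ≤ a^{(1+ε)/ε} + ((1+ε)/ε)·b. -/
open Real

/-- Young's inequality `a y ≤ a ^ p / p + y ^ q / q` at `y = x ^ (1 / q)` absorbs the term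
`x / q` into the left-hand side, leaving `x / p ≤ a ^ p / p + b`. -/
theorem Real.HolderConjugate.le_rpow_add_mul_of_le_mul_rpow_one_div_add {p q x a b : ℝ}
    (hpq : p.HolderConjugate q) (hx : 0 ≤ x) (ha : 0 ≤ a) (h : x ≤ a * x ^ (1 / q) + b) :
    x ≤ a ^ p + p * b := by
  have young : a * x ^ (1 / q) ≤ a ^ p / p + x / q := by
    have := young_inequality_of_nonneg ha (rpow_nonneg hx (1 / q)) hpq
    rwa [← rpow_mul hx, one_div_mul_cancel hpq.symm.ne_zero, rpow_one] at this
  have absorbed : x / p ≤ a ^ p / p + b := by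
    rw [div_eq_mul_inv, ← hpq.symm.one_sub_inv, mul_one_sub, ← div_eq_mul_inv]
    linarith
  calc x = p * (x / p) := (mul_div_cancel₀ x hpq.ne_zero).symm
    _ ≤ p * (a ^ p / p + b) := mul_le_mul_of_nonneg_left absorbed hpq.nonneg
    _ = a ^ p + p * b := by rw [mul_add, mul_div_cancel₀ _ hpq.ne_zero]

theorem Real.holderConjugate_one_add_div_self {ε : ℝ} (hε : 0 < ε) :
    ((1 + ε) / ε).HolderConjugate (1 + ε) := by
  refine HolderConjugate.symm ((holderConjugate_iff_eq_conjExponent ?_).2 ?_)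
  · linarith
  · rw [add_sub_cancel_left]

theorem self_bounding_rpow_general (ε x a b : ℝ) (hε : ε ∈ Set.Ioc (0 : ℝ) 1)
    (hx : 0 ≤ x) (ha : 0 ≤ a)
    (h : x ≤ a * x ^ ((1 : ℝ) / (1 + ε)) + b) :
    x ≤ a ^ ((1 + ε) / ε) + ((1 + ε) / ε) * b :=
  (holderConjugate_one_add_div_self hε.1).le_rpow_add_mul_of_le_mul_rpow_one_div_add hx ha h

theorem self_bounding_rpow (ε x a b : ℝ) (hε : ε ∈ Set.Ioc (0 : ℝ) 1)
    (hx : 0 ≤ x) (ha : 0 ≤ a) (hb : 0 ≤ b)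
    (h : x ≤ a * x ^ ((1 : ℝ) / (1 + ε)) + b) :
    x ≤ a ^ ((1 + ε) / ε) + ((1 + ε) / ε) * b :=
  self_bounding_rpow_general ε x a b hε hx ha h
end

section
/- Let ε ∈ (0,1], t ≥ 1 an integer, κ > 0, and let w₁, …, w_t be nonnegative reals satisfying Σ_{s=1}^t min{1, w_s²} ≤ 2κ. Then Σ_{s=1}^t (w_s/√(1 + w_s²))^{1+ε} · s^{−(1−ε)/2} ≤ (2κ)^{(1+ε)/2} · (log(3t))^{(1−ε)/2}. -/
/-!
With `u_s = w_s / √(1 + w_s²)` we have `u_s² ≤ min 1 (w_s²)`. Hölder's inequality with exponents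
`2/(1+ε)` and `2/(1-ε)` splits the sum as `(∑ u_s²)^((1+ε)/2) · (∑ 1/s)^((1-ε)/2)`; the first factor
is at most `(2κ)^((1+ε)/2)` by hypothesis, and the harmonic sum is at most `1 + log t ≤ log (3t)`.
-/

open Finset Real

lemma sq_div_sqrt_one_add_sq_le_min (x : ℝ) : (x / √(1 + x ^ 2)) ^ 2 ≤ min 1 (x ^ 2) := by
  have hpos : (0 : ℝ) < 1 + x ^ 2 := by positivity
  rw [div_pow, sq_sqrt hpos.le]
  refine le_min ?_ ?_
  · rw [div_le_one hpos]; linarith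
  · rw [div_le_iff₀ hpos]; nlinarith [sq_nonneg x]

lemma sum_Icc_inv_le_log_three_mul (t : ℕ) : ∑ s ∈ Icc 1 t, (s : ℝ)⁻¹ ≤ log (3 * t) := by
  rcases Nat.eq_zero_or_pos t with rfl | ht
  · simp
  have hharmonic : ∑ s ∈ Icc 1 t, (s : ℝ)⁻¹ ≤ 1 + log t := by
    simpa [harmonic_eq_sum_Icc] using harmonic_le_one_add_log t
  have hlog3 : 1 ≤ log 3 := by
    rw [le_log_iff_exp_le (by norm_num)]
    exact exp_one_lt_three.le
  rw [log_mul (by norm_num) (by positivity)]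
  linarith

lemma sum_rpow_mul_rpow_le_of_nonneg {ι : Type*} (s : Finset ι) {f g : ι → ℝ}
    (hf : ∀ i ∈ s, 0 ≤ f i) (hg : ∀ i ∈ s, 0 ≤ g i) {θ : ℝ} (hθ : θ ∈ Set.Ioc 0 1) :
    ∑ i ∈ s, f i ^ θ * g i ^ (1 - θ) ≤ (∑ i ∈ s, f i) ^ θ * (∑ i ∈ s, g i) ^ (1 - θ) := by
  obtain ⟨hθ0, hθ1⟩ := hθ
  rcases hθ1.eq_or_lt with rfl | hθ1
  · simp
  have hpq : (1 / θ).HolderConjugate (1 / (1 - θ)) := by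
    rw [holderConjugate_iff]
    refine ⟨by rw [lt_div_iff₀ hθ0]; linarith, by simp⟩
  have holder := inner_le_Lp_mul_Lq_of_nonneg s hpq
    (fun i hi => rpow_nonneg (hf i hi) θ) (fun i hi => rpow_nonneg (hg i hi) (1 - θ))
  have hf_pow : ∀ i ∈ s, (f i ^ θ) ^ (1 / θ) = f i := fun i hi => by
    rw [← rpow_mul (hf i hi), mul_one_div_cancel hθ0.ne', rpow_one]
  have hg_pow : ∀ i ∈ s, (g i ^ (1 - θ)) ^ (1 / (1 - θ)) = g i := fun i hi => by
    rw [← rpow_mul (hg i hi), mul_one_div_cancel (by linarith), rpow_one]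
  rwa [sum_congr rfl hf_pow, sum_congr rfl hg_pow, one_div_one_div, one_div_one_div] at holder

theorem holder_weight_sum_general (ε : ℝ) (hε : ε ∈ Set.Ioc (0 : ℝ) 1) (t : ℕ)
    (κ : ℝ) (w : ℕ → ℝ) (hw : ∀ s, 0 ≤ w s)
    (hsum : ∑ s ∈ Finset.Icc 1 t, min 1 (w s ^ 2) ≤ 2 * κ) :
    ∑ s ∈ Finset.Icc 1 t, (w s / Real.sqrt (1 + w s ^ 2)) ^ (1 + ε) * (s : ℝ) ^ (-(1 - ε) / 2) ≤
      (2 * κ) ^ ((1 + ε) / 2) * (Real.log (3 * t)) ^ ((1 - ε) / 2) := by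
  obtain ⟨hε0, hε1⟩ := hε
  set u : ℕ → ℝ := fun s => w s / √(1 + w s ^ 2)
  have hθ : (1 + ε) / 2 ∈ Set.Ioc 0 1 := ⟨by linarith, by linarith⟩
  have hterm : ∀ s : ℕ, u s ^ (1 + ε) * (s : ℝ) ^ (-(1 - ε) / 2) =
      (u s ^ 2) ^ ((1 + ε) / 2) * (s : ℝ)⁻¹ ^ (1 - (1 + ε) / 2) := fun s => by
    rw [← rpow_natCast_mul (div_nonneg (hw s) (sqrt_nonneg _)), inv_rpow (Nat.cast_nonneg s),
      ← rpow_neg (Nat.cast_nonneg s)]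
    congr 2 <;> push_cast <;> ring
  have hu : ∑ s ∈ Icc 1 t, u s ^ 2 ≤ 2 * κ :=
    (sum_le_sum fun s _ => sq_div_sqrt_one_add_sq_le_min (w s)).trans hsum
  have hκ : 0 ≤ 2 * κ := (sum_nonneg fun s _ => sq_nonneg (u s)).trans hu
  calc ∑ s ∈ Icc 1 t, u s ^ (1 + ε) * (s : ℝ) ^ (-(1 - ε) / 2)
      = ∑ s ∈ Icc 1 t, (u s ^ 2) ^ ((1 + ε) / 2) * (s : ℝ)⁻¹ ^ (1 - (1 + ε) / 2) :=
        sum_congr rfl fun s _ => hterm s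
    _ ≤ (∑ s ∈ Icc 1 t, u s ^ 2) ^ ((1 + ε) / 2) *
          (∑ s ∈ Icc 1 t, (s : ℝ)⁻¹) ^ (1 - (1 + ε) / 2) :=
        sum_rpow_mul_rpow_le_of_nonneg _ (fun s _ => sq_nonneg _)
          (fun s _ => inv_nonneg.2 (Nat.cast_nonneg s)) hθ
    _ ≤ (2 * κ) ^ ((1 + ε) / 2) * log (3 * t) ^ (1 - (1 + ε) / 2) := by
        gcongr
        · linarith
        · exact sum_Icc_inv_le_log_three_mul t
    _ = (2 * κ) ^ ((1 + ε) / 2) * log (3 * t) ^ ((1 - ε) / 2) := by ring_nf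

theorem holder_weight_sum (ε : ℝ) (hε : ε ∈ Set.Ioc (0 : ℝ) 1) (t : ℕ) (ht : 1 ≤ t)
    (κ : ℝ) (hκ : 0 < κ) (w : ℕ → ℝ) (hw : ∀ s, 0 ≤ w s)
    (hsum : ∑ s ∈ Finset.Icc 1 t, min 1 (w s ^ 2) ≤ 2 * κ) :
    ∑ s ∈ Finset.Icc 1 t, (w s / Real.sqrt (1 + w s ^ 2)) ^ (1 + ε) * (s : ℝ) ^ (-(1 - ε) / 2) ≤
      (2 * κ) ^ ((1 + ε) / 2) * (Real.log (3 * t)) ^ ((1 - ε) / 2) :=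
  holder_weight_sum_general ε hε t κ w hw hsum
end

section
/- Let L: ℝ^d → ℝ be twice continuously differentiable, let θ*, θ̂ ∈ ℝ^d, and let H be a positive definite d×d matrix such that ∇²L(θ) ⪰ (1/3)H for all θ on the segment joining θ* and θ̂. If moreover ⟨∇L(θ̂), θ̂ − θ*⟩ ≤ 0, then ‖θ̂ − θ*‖_H ≤ 3‖∇L(θ*)‖_{H^{-1}}. -/
/-!
Along the segment `θs + t u`, `u = θh - θs`, the directional derivative `t ↦ ∇L(θs + t u) ⬝ u`
has derivative `uᵀ ∇²L u ≥ ‖u‖²_H / 3`, so `‖u‖²_H / 3 ≤ (∇L(θh) - ∇L(θs)) ⬝ u ≤ -∇L(θs) ⬝ u`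
by the optimality of `θh`. Cauchy–Schwarz bounds the right side by `‖u‖_H ‖∇L(θs)‖_{H⁻¹}`,
and dividing by `‖u‖_H` gives the claim.
-/

open Matrix

theorem Matrix.PosDef.dotProduct_sq_le {ι K : Type*} [Fintype ι] [DecidableEq ι] [Field K]
    [LinearOrder K] [IsStrictOrderedRing K] [StarRing K] [TrivialStar K]
    {H : Matrix ι ι K} (hH : H.PosDef) (u g : ι → K) :
    (u ⬝ᵥ g) ^ 2 ≤ (u ⬝ᵥ H *ᵥ u) * (g ⬝ᵥ H⁻¹ *ᵥ g) := by
  have hdet : IsUnit H.det := (isUnit_iff_isUnit_det H).mp hH.isUnit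
  have hHu : H *ᵥ u = u ᵥ* H := by
    rw [← mulVec_transpose, ← conjTranspose_eq_transpose_of_trivial, hH.isHermitian.eq]
  have hnonneg (x : ι → K) : 0 ≤ toBilin' H⁻¹ x x := by
    simpa [toBilin'_apply'] using hH.inv.posSemidef.dotProduct_mulVec_nonneg x
  -- Cauchy–Schwarz for the form of `H⁻¹`, evaluated at `g` and `H u`
  have cs := LinearMap.BilinForm.apply_mul_apply_le_of_forall_zero_le _ hnonneg g (H *ᵥ u)
  have hgHu : toBilin' H⁻¹ g (H *ᵥ u) = u ⬝ᵥ g := by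
    rw [toBilin'_apply', mulVec_mulVec, nonsing_inv_mul H hdet, one_mulVec, dotProduct_comm]
  have hHug : toBilin' H⁻¹ (H *ᵥ u) g = u ⬝ᵥ g := by
    rw [toBilin'_apply', hHu, ← dotProduct_mulVec, mulVec_mulVec, mul_nonsing_inv H hdet,
      one_mulVec]
  have hHuHu : toBilin' H⁻¹ (H *ᵥ u) (H *ᵥ u) = u ⬝ᵥ H *ᵥ u := by
    rw [toBilin'_apply', mulVec_mulVec, nonsing_inv_mul H hdet, one_mulVec, dotProduct_comm]
  rwa [hgHu, hHug, hHuHu, ← sq, toBilin'_apply', mul_comm] at cs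

theorem ContinuousLinearMap.apply_eq_dotProduct {ι K : Type*} [Fintype ι] [DecidableEq ι]
    [CommSemiring K] [TopologicalSpace K] (φ : (ι → K) →L[K] K) (u : ι → K) :
    φ u = u ⬝ᵥ fun i => φ (Pi.single i 1) := by
  conv_lhs => rw [← Finset.univ_sum_single u]
  simp only [map_sum, dotProduct]
  refine Finset.sum_congr rfl fun i _ => ?_
  rw [← smul_eq_mul, ← map_smul, ← Pi.single_smul, smul_eq_mul, mul_one]

section SecondDerivative

variable {E : Type*} [NormedAddCommGroup E] [NormedSpace ℝ E]

theorem ContDiff.hasDerivAt_fderiv_apply_line {F : Type*} [NormedAddCommGroup F]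
    [NormedSpace ℝ F] {f : E → F} (hf : ContDiff ℝ 2 f) (a v : E) (t : ℝ) :
    HasDerivAt (fun s : ℝ => fderiv ℝ f (a + s • v) v)
      (iteratedFDeriv ℝ 2 f (a + t • v) ![v, v]) t := by
  have hline : HasDerivAt (fun s : ℝ => a + s • v) v t := by
    simpa using ((hasDerivAt_id t).smul_const v).const_add a
  have hf' : HasFDerivAt (fderiv ℝ f) (fderiv ℝ (fderiv ℝ f) (a + t • v)) (a + t • v) :=
    ((hf.fderiv_right one_add_one_eq_two.le).differentiable one_ne_zero _).hasFDerivAt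
  have hcomp : HasDerivAt (fun s : ℝ => fderiv ℝ f (a + s • v))
      (fderiv ℝ (fderiv ℝ f) (a + t • v) v) t := hf'.comp_hasDerivAt t hline
  rw [iteratedFDeriv_two_apply]
  simpa using hcomp.clm_apply (hasDerivAt_const t v)

theorem le_fderiv_sub_fderiv_of_le_iteratedFDeriv_two {f : E → ℝ} (hf : ContDiff ℝ 2 f)
    {a b : E} {C : ℝ} (hC : ∀ x ∈ segment ℝ a b, C ≤ iteratedFDeriv ℝ 2 f x ![b - a, b - a]) :
    C ≤ fderiv ℝ f b (b - a) - fderiv ℝ f a (b - a) := by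
  have hderiv := hf.hasDerivAt_fderiv_apply_line a (b - a)
  have hdiff : Differentiable ℝ fun s : ℝ => fderiv ℝ f (a + s • (b - a)) (b - a) :=
    fun t => (hderiv t).differentiableAt
  have hslope (t : ℝ) (ht : t ∈ interior (Set.Icc 0 1)) :
      C ≤ deriv (fun s : ℝ => fderiv ℝ f (a + s • (b - a)) (b - a)) t := by
    rw [(hderiv t).deriv]
    exact hC _ (segment_eq_image' ℝ a b ▸ ⟨t, interior_subset ht, rfl⟩)
  simpa using (convex_Icc (0 : ℝ) 1).mul_sub_le_image_sub_of_le_deriv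
    hdiff.continuous.continuousOn hdiff.differentiableOn hslope 0 (by simp) 1 (by simp) zero_le_one

end SecondDerivative

theorem strongly_convex_error_bound (d : ℕ) (L : (Fin d → ℝ) → ℝ)
    (hL : ContDiff ℝ 2 L) (θs θh : Fin d → ℝ)
    (H : Matrix (Fin d) (Fin d) ℝ) (hH : H.PosDef)
    (hHess : ∀ θ ∈ segment ℝ θs θh, ∀ v : Fin d → ℝ,
      (1 / 3) * (v ⬝ᵥ H *ᵥ v) ≤ iteratedFDeriv ℝ 2 L θ ![v, v])
    (hopt : fderiv ℝ L θh (θh - θs) ≤ 0) :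
    Real.sqrt ((θh - θs) ⬝ᵥ H *ᵥ (θh - θs)) ≤
      3 * Real.sqrt ((fun i => fderiv ℝ L θs (Pi.single i 1)) ⬝ᵥ
        H⁻¹ *ᵥ (fun i => fderiv ℝ L θs (Pi.single i 1))) := by
  set u := θh - θs
  set g : Fin d → ℝ := fun i => fderiv ℝ L θs (Pi.single i 1)
  have hgrowth : 1 / 3 * (u ⬝ᵥ H *ᵥ u) ≤ -(u ⬝ᵥ g) := by
    have := le_fderiv_sub_fderiv_of_le_iteratedFDeriv_two hL fun θ hθ => hHess θ hθ u
    rw [(fderiv ℝ L θs).apply_eq_dotProduct u] at this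
    linarith
  have hA : 0 ≤ u ⬝ᵥ H *ᵥ u := by simpa using hH.posSemidef.dotProduct_mulVec_nonneg u
  have hcs : |u ⬝ᵥ g| ≤ √(u ⬝ᵥ H *ᵥ u) * √(g ⬝ᵥ H⁻¹ *ᵥ g) := by
    rw [← Real.sqrt_mul hA]
    exact Real.abs_le_sqrt (hH.dotProduct_sq_le u g)
  have hkey : √(u ⬝ᵥ H *ᵥ u) ^ 2 ≤ 3 * (√(u ⬝ᵥ H *ᵥ u) * √(g ⬝ᵥ H⁻¹ *ᵥ g)) := by
    rw [Real.sq_sqrt hA]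
    linarith [neg_le_abs (u ⬝ᵥ g)]
  nlinarith [Real.sqrt_nonneg (u ⬝ᵥ H *ᵥ u), Real.sqrt_nonneg (g ⬝ᵥ H⁻¹ *ᵥ g)]
end
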